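/- In the resolvent-sequence setting, if (H1) or (H2) or (H3) holds, then λₙ^ℓ ∫₀^β |v⁶ₙ|² dx → 0 and λₙ^{ℓ+2} ∫₀^β |v⁵ₙ|² dx → 0 as n → ∞. -/

import Mathlib

open Set Filter MeasureTheory

noncomputable section

/-- The resolvent-sequence setting for the locally damped Bresse system with
parameter `ℓ`: a sequence of nonzero frequencies `lam n` with `|lam n| → ∞`,
solutions `Uₙ = (v1,…,v6)` and right-hand sides `Fₙ = (f1,…,f6)` of the resolvent
equations `(lam n)^ℓ (i (lam n) I − 𝒜) Uₙ = Fₙ`, with `‖Uₙ‖_H = 1` and `‖Fₙ‖_H → 0`. -/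
structure BresseSetting (ρ₁ ρ₂ k₁ k₂ k₃ l L β a₀ : ℝ) (ℓ : ℕ) where
  lam : ℕ → ℝ
  v1 : ℕ → ℝ → ℂ
  v2 : ℕ → ℝ → ℂ
  v3 : ℕ → ℝ → ℂ
  v4 : ℕ → ℝ → ℂ
  v5 : ℕ → ℝ → ℂ
  v6 : ℕ → ℝ → ℂ
  f1 : ℕ → ℝ → ℂ
  f2 : ℕ → ℝ → ℂ
  f3 : ℕ → ℝ → ℂ
  f4 : ℕ → ℝ → ℂ
  f5 : ℕ → ℝ → ℂ
  f6 : ℕ → ℝ → ℂ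
  lam_ne : ∀ n, lam n ≠ 0
  lam_tendsto : Tendsto (fun n => |lam n|) atTop atTop
  reg_v1 : ∀ n, ContDiffOn ℝ 2 (v1 n) (Icc 0 L)
  reg_v3 : ∀ n, ContDiffOn ℝ 2 (v3 n) (Icc 0 L)
  reg_v5 : ∀ n, ContDiffOn ℝ 1 (v5 n) (Icc 0 L)
  reg_v5_left : ∀ n, ContDiffOn ℝ 2 (v5 n) (Icc 0 β)
  reg_v5_right : ∀ n, ContDiffOn ℝ 2 (v5 n) (Icc β L)
  reg_v2 : ∀ n, ContDiffOn ℝ 1 (v2 n) (Icc 0 L)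
  reg_v4 : ∀ n, ContDiffOn ℝ 1 (v4 n) (Icc 0 L)
  reg_v6 : ∀ n, ContDiffOn ℝ 1 (v6 n) (Icc 0 L)
  reg_f1 : ∀ n, ContDiffOn ℝ 1 (f1 n) (Icc 0 L)
  reg_f3 : ∀ n, ContDiffOn ℝ 1 (f3 n) (Icc 0 L)
  reg_f5 : ∀ n, ContDiffOn ℝ 1 (f5 n) (Icc 0 L)
  reg_f2 : ∀ n, ContinuousOn (f2 n) (Icc 0 L)
  reg_f4 : ∀ n, ContinuousOn (f4 n) (Icc 0 L)
  reg_f6 : ∀ n, ContinuousOn (f6 n) (Icc 0 L)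
  bc_zero : ∀ n, v1 n 0 = 0 ∧ v2 n 0 = 0 ∧ v3 n 0 = 0 ∧ v4 n 0 = 0 ∧ v5 n 0 = 0 ∧
      v6 n 0 = 0 ∧ f1 n 0 = 0 ∧ f3 n 0 = 0 ∧ f5 n 0 = 0
  bc_L : ∀ n, v1 n L = 0 ∧ v2 n L = 0 ∧ v3 n L = 0 ∧ v4 n L = 0 ∧ v5 n L = 0 ∧
      v6 n L = 0 ∧ f1 n L = 0 ∧ f3 n L = 0 ∧ f5 n L = 0
  eq1 : ∀ n, ∀ x ∈ Ioo (0 : ℝ) β ∪ Ioo β L,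
      Complex.I * (lam n : ℂ) * v1 n x - v2 n x = (lam n : ℂ) ^ (-(ℓ : ℤ)) * f1 n x
  eq2 : ∀ n, ∀ x ∈ Ioo (0 : ℝ) β ∪ Ioo β L,
      Complex.I * (lam n : ℂ) * (ρ₁ : ℂ) * v2 n x
        - (k₁ : ℂ) * deriv (fun y => deriv (v1 n) y + v3 n y + (l : ℂ) * v5 n y) x
        - (l : ℂ) * (k₃ : ℂ) * (deriv (v5 n) x - (l : ℂ) * v1 n x)
        = (ρ₁ : ℂ) * (lam n : ℂ) ^ (-(ℓ : ℤ)) * f2 n x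
  eq3 : ∀ n, ∀ x ∈ Ioo (0 : ℝ) β ∪ Ioo β L,
      Complex.I * (lam n : ℂ) * v3 n x - v4 n x = (lam n : ℂ) ^ (-(ℓ : ℤ)) * f3 n x
  eq4 : ∀ n, ∀ x ∈ Ioo (0 : ℝ) β ∪ Ioo β L,
      Complex.I * (lam n : ℂ) * (ρ₂ : ℂ) * v4 n x
        - (k₂ : ℂ) * deriv (deriv (v3 n)) x
        + (k₁ : ℂ) * (deriv (v1 n) x + v3 n x + (l : ℂ) * v5 n x)
        = (ρ₂ : ℂ) * (lam n : ℂ) ^ (-(ℓ : ℤ)) * f4 n x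
  eq5 : ∀ n, ∀ x ∈ Ioo (0 : ℝ) β ∪ Ioo β L,
      Complex.I * (lam n : ℂ) * v5 n x - v6 n x = (lam n : ℂ) ^ (-(ℓ : ℤ)) * f5 n x
  eq6 : ∀ n, ∀ x ∈ Ioo (0 : ℝ) β ∪ Ioo β L,
      Complex.I * (lam n : ℂ) * (ρ₁ : ℂ) * v6 n x
        - (k₃ : ℂ) * deriv (fun y => deriv (v5 n) y - (l : ℂ) * v1 n y) x
        + (l : ℂ) * (k₁ : ℂ) * (deriv (v1 n) x + v3 n x + (l : ℂ) * v5 n x)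
        + (if x < β then (a₀ : ℂ) else 0) * v6 n x
        = (ρ₁ : ℂ) * (lam n : ℂ) ^ (-(ℓ : ℤ)) * f6 n x
  normU : ∀ n, (∫ x in (0 : ℝ)..L,
      (k₁ * ‖deriv (v1 n) x + v3 n x + (l : ℂ) * v5 n x‖ ^ 2 + ρ₁ * ‖v2 n x‖ ^ 2
        + k₂ * ‖deriv (v3 n) x‖ ^ 2 + ρ₂ * ‖v4 n x‖ ^ 2
        + k₃ * ‖deriv (v5 n) x - (l : ℂ) * v1 n x‖ ^ 2 + ρ₁ * ‖v6 n x‖ ^ 2)) = 1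
  normF : Tendsto (fun n => ∫ x in (0 : ℝ)..L,
      (k₁ * ‖deriv (f1 n) x + f3 n x + (l : ℂ) * f5 n x‖ ^ 2 + ρ₁ * ‖f2 n x‖ ^ 2
        + k₂ * ‖deriv (f3 n) x‖ ^ 2 + ρ₂ * ‖f4 n x‖ ^ 2
        + k₃ * ‖deriv (f5 n) x - (l : ℂ) * f1 n x‖ ^ 2 + ρ₁ * ‖f6 n x‖ ^ 2))
      atTop (nhds 0)

/-!
Taking the real part of the `H`-inner product of the resolvent equation with `Uₙ`, the skew part
`iλₙ‖Uₙ‖²` drops out and integration by parts turns `Re ⟪𝒜 Uₙ, Uₙ⟫_H` into `-a₀ ∫₀^β |v⁶ₙ|²` plus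
a boundary flux that vanishes at `0` and `L`. Hence
`a₀ ∫₀^β |v⁶ₙ|² = λₙ^{-ℓ} Re ⟪Fₙ, Uₙ⟫_H`, and `|λₙ|^ℓ a₀ ∫₀^β |v⁶ₙ|² ≤ ‖Fₙ‖_H → 0`.

For `v⁵ₙ`, the fifth equation `iλₙ v⁵ₙ = v⁶ₙ + λₙ^{-ℓ} f⁵ₙ` reduces the second estimate to the first
one and a bound `sup |f⁵ₙ| ≲ ‖Fₙ‖_H`. The latter holds because `f¹ₙ ± i f⁵ₙ` solve first-order
equations `w' = ± i l w + (data)` whose data are the strains of `Fₙ`, all controlled by `‖Fₙ‖_H`.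
-/

open Topology ComplexConjugate Complex

theorem le_two_mul_sqrt_mul_of_forall_le {a b c : ℝ} (ha : 0 ≤ a) (hb : 0 ≤ b)
    (h : ∀ t > 0, c ≤ a / t + b * t) : c ≤ 2 * √(a * b) := by
  -- `t = (√a + ε) / (√b + ε)` gives `c ≤ 2 √a √b + ε (√a + √b)`; let `ε → 0⁺`.
  have hbound : ∀ ε > 0, c ≤ 2 * √(a * b) + ε * (√a + √b) := by
    intro ε hε
    have hsa := Real.sqrt_nonneg a
    have hsb := Real.sqrt_nonneg b
    have hA : a / (√a + ε) ≤ √a := by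
      rw [div_le_iff₀ (by positivity)]; nlinarith [Real.mul_self_sqrt ha]
    have hB : b / (√b + ε) ≤ √b := by
      rw [div_le_iff₀ (by positivity)]; nlinarith [Real.mul_self_sqrt hb]
    calc c ≤ a / ((√a + ε) / (√b + ε)) + b * ((√a + ε) / (√b + ε)) := h _ (by positivity)
      _ = a / (√a + ε) * (√b + ε) + b / (√b + ε) * (√a + ε) := by
        rw [div_div_eq_mul_div]; ring
      _ ≤ √a * (√b + ε) + √b * (√a + ε) := by gcongr
      _ = 2 * √(a * b) + ε * (√a + √b) := by rw [Real.sqrt_mul ha]; ring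
  have hlim : Tendsto (fun ε => 2 * √(a * b) + ε * (√a + √b)) (𝓝[>] 0)
      (𝓝 (2 * √(a * b))) := by
    have : Continuous fun ε : ℝ => 2 * √(a * b) + ε * (√a + √b) := by fun_prop
    simpa using (this.tendsto 0).mono_left nhdsWithin_le_nhds
  exact ge_of_tendsto hlim (eventually_nhdsWithin_of_forall hbound)

theorem integral_norm_le_sqrt_of_mul_sq_le {E : Type*} [NormedAddCommGroup E] {a b c : ℝ}
    {g : ℝ → E} {D : ℝ → ℝ} (hab : a ≤ b) (hc : 0 < c) (hg : ContinuousOn g (Icc a b))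
    (hD : ContinuousOn D (Icc a b)) (hgD : ∀ x ∈ Icc a b, c * ‖g x‖ ^ 2 ≤ D x) :
    ∫ x in a..b, ‖g x‖ ≤ √((b - a) * (∫ x in a..b, D x) / c) := by
  have hD0 : 0 ≤ ∫ x in a..b, D x := intervalIntegral.integral_nonneg hab fun x hx =>
    (mul_nonneg hc.le (sq_nonneg _)).trans (hgD x hx)
  have hgi := hg.norm.intervalIntegrable_of_Icc (μ := volume) hab
  have hDi := hD.intervalIntegrable_of_Icc (μ := volume) hab
  have key : ∀ t > 0, ∫ x in a..b, ‖g x‖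
      ≤ (b - a) / 2 / t + (∫ x in a..b, D x) / (2 * c) * t := by
    intro t ht
    calc ∫ x in a..b, ‖g x‖ ≤ ∫ x in a..b, (1 / (2 * t) + t / (2 * c) * D x) := by
          refine intervalIntegral.integral_mono_on hab hgi
            (intervalIntegrable_const.add (hDi.const_mul _)) fun x hx => ?_
          have h1 := hgD x hx
          have h2 : t / (2 * c) * (c * ‖g x‖ ^ 2) ≤ t / (2 * c) * D x := by gcongr
          have h3 : ‖g x‖ ≤ 1 / (2 * t) + t / (2 * c) * (c * ‖g x‖ ^ 2) := by
            field_simp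
            nlinarith [sq_nonneg (t * ‖g x‖ - 1)]
          linarith
      _ = (b - a) / 2 / t + (∫ x in a..b, D x) / (2 * c) * t := by
          rw [intervalIntegral.integral_add intervalIntegrable_const (hDi.const_mul _),
            intervalIntegral.integral_const, intervalIntegral.integral_const_mul, smul_eq_mul]
          ring
  calc ∫ x in a..b, ‖g x‖ ≤ 2 * √((b - a) / 2 * ((∫ x in a..b, D x) / (2 * c))) :=
        le_two_mul_sqrt_mul_of_forall_le (by linarith) (by positivity) key
    _ = √((b - a) * (∫ x in a..b, D x) / c) := by
        rw [show (b - a) / 2 * ((∫ x in a..b, D x) / (2 * c))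
            = (b - a) * (∫ x in a..b, D x) / c / 2 ^ 2 by ring, Real.sqrt_div' _ (by norm_num),
          Real.sqrt_sq (by norm_num)]
        ring

theorem norm_le_integral_norm_of_hasDerivAt {E : Type*} [NormedAddCommGroup E]
    [NormedSpace ℝ E] [CompleteSpace E] {a b x : ℝ} {u u' : ℝ → E} (hx : x ∈ Icc a b)
    (hu : ContinuousOn u (Icc a b)) (hu' : ContinuousOn u' (Icc a b))
    (hderiv : ∀ y ∈ Ioo a b, HasDerivAt u (u' y) y) (ha : u a = 0) :
    ‖u x‖ ≤ ∫ y in a..b, ‖u' y‖ := by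
  have hsub : Icc a x ⊆ Icc a b := Icc_subset_Icc le_rfl hx.2
  have hftc : ∫ y in a..x, u' y = u x := by
    rw [intervalIntegral.integral_eq_sub_of_hasDerivAt_of_le hx.1 (hu.mono hsub)
      (fun y hy => hderiv y ⟨hy.1, hy.2.trans_le hx.2⟩)
      ((hu'.mono hsub).intervalIntegrable_of_Icc hx.1), ha, sub_zero]
  have hint := hu'.norm.intervalIntegrable_of_Icc (μ := volume) (hx.1.trans hx.2)
  calc ‖u x‖ = ‖∫ y in a..x, u' y‖ := by rw [hftc]
    _ ≤ ∫ y in a..x, ‖u' y‖ := intervalIntegral.norm_integral_le_integral_norm hx.1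
    _ ≤ ∫ y in a..b, ‖u' y‖ :=
      intervalIntegral.integral_mono_interval le_rfl hx.1 hx.2
        (Eventually.of_forall fun _ => norm_nonneg _) hint

theorem ContDiffOn.hasDerivAt_derivWithin_Icc {E : Type*} [NormedAddCommGroup E]
    [NormedSpace ℝ E] {n : WithTop ℕ∞} {f : ℝ → E} {a b x : ℝ} (hf : ContDiffOn ℝ n f (Icc a b))
    (hn : n ≠ 0) (hx : x ∈ Ioo a b) : HasDerivAt f (derivWithin f (Icc a b) x) x := by
  have hmem := Icc_mem_nhds hx.1 hx.2
  rw [derivWithin_of_mem_nhds hmem]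
  exact ((hf.contDiffAt hmem).differentiableAt hn).hasDerivAt

theorem derivWithin_Icc_eventuallyEq_deriv {E : Type*} [NormedAddCommGroup E]
    [NormedSpace ℝ E] {f : ℝ → E} {a b x : ℝ} (hx : x ∈ Ioo a b) :
    derivWithin f (Icc a b) =ᶠ[𝓝 x] deriv f :=
  eventually_of_mem (isOpen_Ioo.mem_nhds hx) fun _ hy =>
    derivWithin_of_mem_nhds (Icc_mem_nhds hy.1 hy.2)

theorem ContDiffOn.differentiableAt_deriv {E : Type*} [NormedAddCommGroup E]
    [NormedSpace ℝ E] {f : ℝ → E} {s : Set ℝ} {x : ℝ} (hf : ContDiffOn ℝ 2 f s) (hs : IsOpen s)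
    (hx : x ∈ s) : DifferentiableAt ℝ (deriv f) x :=
  ((hf.deriv_of_isOpen hs (m := 1) (by norm_num)).contDiffAt (hs.mem_nhds hx)).differentiableAt
    one_ne_zero

theorem HasDerivAt.mul_conj {u w : ℝ → ℂ} {u' w' : ℂ} {x : ℝ} (hu : HasDerivAt u u' x)
    (hw : HasDerivAt w w' x) :
    HasDerivAt (fun y => u y * conj (w y)) (u' * conj (w x) + u x * conj w') x :=
  hu.mul hw.star

theorem HasDerivAt.const_mul_sub_eq_of_eventuallyEq {v w f : ℝ → ℂ} {v' w' f' c ε : ℂ} {x : ℝ}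
    (hv : HasDerivAt v v' x) (hw : HasDerivAt w w' x) (hf : HasDerivAt f f' x)
    (h : (fun y => c * v y - w y) =ᶠ[𝓝 x] fun y => ε * f y) : c * v' - w' = ε * f' :=
  ((hv.const_mul c).sub hw).unique ((hf.const_mul ε).congr_of_eventuallyEq h)

/-- Pointwise form of `Re ⟪(iλ - 𝒜) U, U⟫_H = ∫ a |v₆|²`: `h₁`, `h₃`, `h₅` are the differentiated
first-order resolvent equations, `h₂`, `h₄`, `h₆` the second-order ones. -/
theorem re_flux_deriv_eq {lam ε a ρ₁ ρ₂ k₁ k₂ k₃ l : ℝ}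
    {S₁ S₁' D₃ D₃' S₅ S₅' v₂ v₂' v₄ v₄' v₆ v₆' s g f₂ f₃' f₄ f₆ : ℂ}
    (h₁ : v₂' + v₄ + l * v₆ = I * lam * S₁ - ε * s)
    (h₃ : v₄' = I * lam * D₃ - ε * f₃')
    (h₅ : v₆' - l * v₂ = I * lam * S₅ - ε * g)
    (h₂ : I * lam * ρ₁ * v₂ - k₁ * S₁' - l * k₃ * S₅ = ρ₁ * ε * f₂)
    (h₄ : I * lam * ρ₂ * v₄ - k₂ * D₃' + k₁ * S₁ = ρ₂ * ε * f₄)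
    (h₆ : I * lam * ρ₁ * v₆ - k₃ * S₅' + l * k₁ * S₁ + a * v₆ = ρ₁ * ε * f₆) :
    (k₁ * (v₂' * conj S₁ + v₂ * conj S₁') + k₂ * (v₄' * conj D₃ + v₄ * conj D₃')
      + k₃ * (v₆' * conj S₅ + v₆ * conj S₅')).re
      = a * ‖v₆‖ ^ 2 - ε * (k₁ * s * conj S₁ + ρ₁ * f₂ * conj v₂ + k₂ * f₃' * conj D₃
        + ρ₂ * f₄ * conj v₄ + k₃ * g * conj S₅ + ρ₁ * f₆ * conj v₆).re := by
  have c₂ := congrArg conj h₂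
  have c₄ := congrArg conj h₄
  have c₆ := congrArg conj h₆
  simp only [map_sub, map_add, map_mul, conj_I, conj_ofReal] at c₂ c₄ c₆
  -- the first summand is purely imaginary and drops out of the real part
  have key : k₁ * (v₂' * conj S₁ + v₂ * conj S₁') + k₂ * (v₄' * conj D₃ + v₄ * conj D₃')
      + k₃ * (v₆' * conj S₅ + v₆ * conj S₅')
      = I * lam * (k₁ * (S₁ * conj S₁) + k₂ * (D₃ * conj D₃) + k₃ * (S₅ * conj S₅)
          - ρ₁ * (v₂ * conj v₂) - ρ₂ * (v₄ * conj v₄) - ρ₁ * (v₆ * conj v₆))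
        + a * (v₆ * conj v₆)
        - ε * (k₁ * s * conj S₁ + k₂ * f₃' * conj D₃ + k₃ * g * conj S₅)
        - ε * conj (ρ₁ * f₂ * conj v₂ + ρ₂ * f₄ * conj v₄ + ρ₁ * f₆ * conj v₆) := by
    simp only [map_add, map_mul, conj_conj, conj_ofReal]
    linear_combination k₁ * conj S₁ * h₁ + k₂ * conj D₃ * h₃ + k₃ * conj S₅ * h₅
      - v₂ * c₂ - v₄ * c₄ - v₆ * c₆
  rw [key]
  simp only [mul_conj, ← ofReal_mul, ← ofReal_sub, ← ofReal_add, sub_re, add_re, conj_re,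
    mul_re, I_re, I_im, ofReal_re, ofReal_im, normSq_eq_norm_sq]
  ring

theorem norm_ofReal_mul_mul_conj_le {c δ : ℝ} (hc : 0 ≤ c) (hδ : 0 < δ) (u v : ℂ) :
    ‖(c : ℂ) * u * conj v‖ ≤ δ / 2 * (c * ‖v‖ ^ 2) + 1 / (2 * δ) * (c * ‖u‖ ^ 2) := by
  rw [norm_mul, norm_mul, Complex.norm_conj, Complex.norm_real, Real.norm_of_nonneg hc]
  have key : δ / 2 * (c * ‖v‖ ^ 2) + 1 / (2 * δ) * (c * ‖u‖ ^ 2) - c * ‖u‖ * ‖v‖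
      = c * (δ * ‖v‖ - ‖u‖) ^ 2 / (2 * δ) := by
    field_simp
    ring
  have : 0 ≤ c * (δ * ‖v‖ - ‖u‖) ^ 2 / (2 * δ) := by positivity
  linarith

theorem abs_pow_add_two_mul_norm_sq_le {lam : ℝ} (hlam : lam ≠ 0) (ℓ : ℕ) {v w f : ℂ}
    (h : I * lam * v - w = (lam : ℂ) ^ (-(ℓ : ℤ)) * f) :
    |lam| ^ (ℓ + 2) * ‖v‖ ^ 2 ≤ 2 * (|lam| ^ ℓ * ‖w‖ ^ 2) + 2 * ((|lam| ^ ℓ)⁻¹ * ‖f‖ ^ 2) := by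
  have hμ : 0 < |lam| ^ ℓ := pow_pos (abs_pos.2 hlam) ℓ
  have h₁ : |lam| * ‖v‖ ≤ ‖w‖ + (|lam| ^ ℓ)⁻¹ * ‖f‖ := by
    calc |lam| * ‖v‖ = ‖w + (lam : ℂ) ^ (-(ℓ : ℤ)) * f‖ := by
          rw [← sub_eq_iff_eq_add'.1 h]; simp
      _ ≤ ‖w‖ + (|lam| ^ ℓ)⁻¹ * ‖f‖ := by
          refine (norm_add_le _ _).trans_eq ?_
          simp
  have h₂ : (|lam| * ‖v‖) ^ 2 ≤ 2 * (‖w‖ ^ 2 + ((|lam| ^ ℓ)⁻¹ * ‖f‖) ^ 2) :=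
    (pow_le_pow_left₀ (by positivity) h₁ 2).trans add_sq_le
  calc |lam| ^ (ℓ + 2) * ‖v‖ ^ 2 = |lam| ^ ℓ * (|lam| * ‖v‖) ^ 2 := by ring
    _ ≤ |lam| ^ ℓ * (2 * (‖w‖ ^ 2 + ((|lam| ^ ℓ)⁻¹ * ‖f‖) ^ 2)) := by gcongr
    _ = 2 * (|lam| ^ ℓ * ‖w‖ ^ 2) + 2 * ((|lam| ^ ℓ)⁻¹ * ‖f‖ ^ 2) := by
        field_simp

section Strains

variable (ρ₁ ρ₂ k₁ k₂ k₃ l L : ℝ)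

/-- Derivatives are taken within `[0, L]`, so that strains are continuous up to the boundary;
on `(0, L)` they agree with `deriv`. -/
def shearStrain (w₁ w₃ w₅ : ℝ → ℂ) (x : ℝ) : ℂ :=
  derivWithin w₁ (Icc 0 L) x + w₃ x + l * w₅ x

def axialStrain (w₁ w₅ : ℝ → ℂ) (x : ℝ) : ℂ :=
  derivWithin w₅ (Icc 0 L) x - l * w₁ x

def energyDensity (w₁ w₂ w₃ w₄ w₅ w₆ : ℝ → ℂ) (x : ℝ) : ℝ :=
  k₁ * ‖shearStrain l L w₁ w₃ w₅ x‖ ^ 2 + ρ₁ * ‖w₂ x‖ ^ 2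
    + k₂ * ‖derivWithin w₃ (Icc 0 L) x‖ ^ 2 + ρ₂ * ‖w₄ x‖ ^ 2
    + k₃ * ‖axialStrain l L w₁ w₅ x‖ ^ 2 + ρ₁ * ‖w₆ x‖ ^ 2

variable {ρ₁ ρ₂ k₁ k₂ k₃ l L} {w₁ w₂ w₃ w₄ w₅ w₆ : ℝ → ℂ}

theorem continuousOn_shearStrain (hL : 0 < L) (h₁ : ContDiffOn ℝ 1 w₁ (Icc 0 L))
    (h₃ : ContinuousOn w₃ (Icc 0 L)) (h₅ : ContinuousOn w₅ (Icc 0 L)) :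
    ContinuousOn (shearStrain l L w₁ w₃ w₅) (Icc 0 L) :=
  ((h₁.continuousOn_derivWithin (uniqueDiffOn_Icc hL) le_rfl).add h₃).add
    (continuousOn_const.mul h₅)

theorem continuousOn_axialStrain (hL : 0 < L) (h₁ : ContinuousOn w₁ (Icc 0 L))
    (h₅ : ContDiffOn ℝ 1 w₅ (Icc 0 L)) :
    ContinuousOn (axialStrain l L w₁ w₅) (Icc 0 L) :=
  (h₅.continuousOn_derivWithin (uniqueDiffOn_Icc hL) le_rfl).sub (continuousOn_const.mul h₁)

theorem continuousOn_energyDensity (hL : 0 < L) (h₁ : ContDiffOn ℝ 1 w₁ (Icc 0 L))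
    (h₂ : ContinuousOn w₂ (Icc 0 L)) (h₃ : ContDiffOn ℝ 1 w₃ (Icc 0 L))
    (h₄ : ContinuousOn w₄ (Icc 0 L)) (h₅ : ContDiffOn ℝ 1 w₅ (Icc 0 L))
    (h₆ : ContinuousOn w₆ (Icc 0 L)) :
    ContinuousOn (energyDensity ρ₁ ρ₂ k₁ k₂ k₃ l L w₁ w₂ w₃ w₄ w₅ w₆) (Icc 0 L) := by
  have hs := continuousOn_shearStrain (l := l) hL h₁ h₃.continuousOn h₅.continuousOn
  have ha := continuousOn_axialStrain (l := l) hL h₁.continuousOn h₅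
  have hd := h₃.continuousOn_derivWithin (uniqueDiffOn_Icc hL) le_rfl
  unfold energyDensity
  fun_prop

theorem energyDensity_nonneg (hρ₁ : 0 ≤ ρ₁) (hρ₂ : 0 ≤ ρ₂) (hk₁ : 0 ≤ k₁) (hk₂ : 0 ≤ k₂)
    (hk₃ : 0 ≤ k₃) (x : ℝ) : 0 ≤ energyDensity ρ₁ ρ₂ k₁ k₂ k₃ l L w₁ w₂ w₃ w₄ w₅ w₆ x := by
  unfold energyDensity
  positivity

theorem energyDensity_eq_of_mem_Ioo {x : ℝ} (hx : x ∈ Ioo 0 L) :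
    energyDensity ρ₁ ρ₂ k₁ k₂ k₃ l L w₁ w₂ w₃ w₄ w₅ w₆ x =
      k₁ * ‖deriv w₁ x + w₃ x + l * w₅ x‖ ^ 2 + ρ₁ * ‖w₂ x‖ ^ 2
        + k₂ * ‖deriv w₃ x‖ ^ 2 + ρ₂ * ‖w₄ x‖ ^ 2
        + k₃ * ‖deriv w₅ x - l * w₁ x‖ ^ 2 + ρ₁ * ‖w₆ x‖ ^ 2 := by
  simp only [energyDensity, shearStrain, axialStrain,
    derivWithin_of_mem_nhds (Icc_mem_nhds hx.1 hx.2)]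

end Strains

namespace BresseSetting

variable {ρ₁ ρ₂ k₁ k₂ k₃ l L β a₀ : ℝ} {ℓ : ℕ} (S : BresseSetting ρ₁ ρ₂ k₁ k₂ k₃ l L β a₀ ℓ)
  (n : ℕ)

def stateDensity : ℝ → ℝ :=
  energyDensity ρ₁ ρ₂ k₁ k₂ k₃ l L (S.v1 n) (S.v2 n) (S.v3 n) (S.v4 n) (S.v5 n) (S.v6 n)

def forceDensity : ℝ → ℝ :=
  energyDensity ρ₁ ρ₂ k₁ k₂ k₃ l L (S.f1 n) (S.f2 n) (S.f3 n) (S.f4 n) (S.f5 n) (S.f6 n)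

def forceEnergy : ℝ := ∫ x in (0 : ℝ)..L, S.forceDensity n x

/-- The integrand of `⟪Fₙ, Uₙ⟫_H`. -/
def pairing (x : ℝ) : ℂ :=
  k₁ * shearStrain l L (S.f1 n) (S.f3 n) (S.f5 n) x
      * conj (shearStrain l L (S.v1 n) (S.v3 n) (S.v5 n) x)
    + ρ₁ * S.f2 n x * conj (S.v2 n x)
    + k₂ * derivWithin (S.f3 n) (Icc 0 L) x * conj (derivWithin (S.v3 n) (Icc 0 L) x)
    + ρ₂ * S.f4 n x * conj (S.v4 n x)
    + k₃ * axialStrain l L (S.f1 n) (S.f5 n) x * conj (axialStrain l L (S.v1 n) (S.v5 n) x)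
    + ρ₁ * S.f6 n x * conj (S.v6 n x)

/-- Integration by parts moves `Re ⟪𝒜 Uₙ, Uₙ⟫_H` onto this boundary term. -/
def flux (x : ℝ) : ℝ :=
  (k₁ * (S.v2 n x * conj (shearStrain l L (S.v1 n) (S.v3 n) (S.v5 n) x))
    + k₂ * (S.v4 n x * conj (derivWithin (S.v3 n) (Icc 0 L) x))
    + k₃ * (S.v6 n x * conj (axialStrain l L (S.v1 n) (S.v5 n) x))).re

theorem integral_stateDensity (hL : 0 < L) : ∫ x in (0 : ℝ)..L, S.stateDensity n x = 1 := by
  rw [← S.normU n]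
  exact intervalIntegral.integral_congr_Ioo_of_le hL.le fun _ hx => energyDensity_eq_of_mem_Ioo hx

theorem tendsto_forceEnergy (hL : 0 < L) : Tendsto S.forceEnergy atTop (𝓝 0) :=
  S.normF.congr fun _ => (intervalIntegral.integral_congr_Ioo_of_le hL.le
    fun _ hx => energyDensity_eq_of_mem_Ioo hx).symm

theorem continuousOn_stateDensity (hL : 0 < L) : ContinuousOn (S.stateDensity n) (Icc 0 L) :=
  continuousOn_energyDensity hL ((S.reg_v1 n).of_le one_le_two) (S.reg_v2 n).continuousOn
    ((S.reg_v3 n).of_le one_le_two) (S.reg_v4 n).continuousOn (S.reg_v5 n)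
    (S.reg_v6 n).continuousOn

theorem continuousOn_forceDensity (hL : 0 < L) : ContinuousOn (S.forceDensity n) (Icc 0 L) :=
  continuousOn_energyDensity hL (S.reg_f1 n) (S.reg_f2 n) (S.reg_f3 n) (S.reg_f4 n)
    (S.reg_f5 n) (S.reg_f6 n)

theorem continuousOn_pairing (hL : 0 < L) : ContinuousOn (S.pairing n) (Icc 0 L) := by
  have := continuousOn_shearStrain (l := l) hL (S.reg_f1 n) (S.reg_f3 n).continuousOn
    (S.reg_f5 n).continuousOn
  have := continuousOn_shearStrain (l := l) hL ((S.reg_v1 n).of_le one_le_two)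
    (S.reg_v3 n).continuousOn (S.reg_v5 n).continuousOn
  have := continuousOn_axialStrain (l := l) hL (S.reg_f1 n).continuousOn (S.reg_f5 n)
  have := continuousOn_axialStrain (l := l) hL (S.reg_v1 n).continuousOn (S.reg_v5 n)
  have := (S.reg_f3 n).continuousOn_derivWithin (uniqueDiffOn_Icc hL) le_rfl
  have := (S.reg_v3 n).continuousOn_derivWithin (uniqueDiffOn_Icc hL) one_le_two
  have := (S.reg_v2 n).continuousOn
  have := (S.reg_v4 n).continuousOn
  have := (S.reg_v6 n).continuousOn
  have := S.reg_f2 n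
  have := S.reg_f4 n
  have := S.reg_f6 n
  unfold pairing
  fun_prop

theorem continuousOn_flux (hL : 0 < L) : ContinuousOn (S.flux n) (Icc 0 L) := by
  have := continuousOn_shearStrain (l := l) hL ((S.reg_v1 n).of_le one_le_two)
    (S.reg_v3 n).continuousOn (S.reg_v5 n).continuousOn
  have := continuousOn_axialStrain (l := l) hL (S.reg_v1 n).continuousOn (S.reg_v5 n)
  have := (S.reg_v3 n).continuousOn_derivWithin (uniqueDiffOn_Icc hL) one_le_two
  have := (S.reg_v2 n).continuousOn
  have := (S.reg_v4 n).continuousOn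
  have := (S.reg_v6 n).continuousOn
  exact Complex.continuous_re.comp_continuousOn (by fun_prop)

theorem flux_zero : S.flux n 0 = 0 := by
  obtain ⟨-, h₂, -, h₄, -, h₆, -⟩ := S.bc_zero n
  simp [flux, h₂, h₄, h₆]

theorem flux_L : S.flux n L = 0 := by
  obtain ⟨-, h₂, -, h₄, -, h₆, -⟩ := S.bc_L n
  simp [flux, h₂, h₄, h₆]

theorem hasDerivAt_shearStrain {x : ℝ} (hx : x ∈ Ioo 0 L) :
    HasDerivAt (shearStrain l L (S.v1 n) (S.v3 n) (S.v5 n))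
      (deriv (fun y => deriv (S.v1 n) y + S.v3 n y + l * S.v5 n y) x) x := by
  have dd₁ := ((S.reg_v1 n).mono Ioo_subset_Icc_self).differentiableAt_deriv isOpen_Ioo hx
  have d₃ := (S.reg_v3 n).hasDerivAt_derivWithin_Icc two_ne_zero hx
  have d₅ := (S.reg_v5 n).hasDerivAt_derivWithin_Icc one_ne_zero hx
  refine ((dd₁.add d₃.differentiableAt).add
    (d₅.differentiableAt.const_mul _)).hasDerivAt.congr_of_eventuallyEq ?_
  filter_upwards [derivWithin_Icc_eventuallyEq_deriv (f := S.v1 n) hx] with y hy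
  simp only [shearStrain, hy, Pi.add_apply]

theorem hasDerivAt_derivWithin_v3 {x : ℝ} (hx : x ∈ Ioo 0 L) :
    HasDerivAt (derivWithin (S.v3 n) (Icc 0 L)) (deriv (deriv (S.v3 n)) x) x :=
  (((S.reg_v3 n).mono Ioo_subset_Icc_self).differentiableAt_deriv isOpen_Ioo
    hx).hasDerivAt.congr_of_eventuallyEq (derivWithin_Icc_eventuallyEq_deriv hx)

theorem hasDerivAt_axialStrain (hβ : 0 < β) (hβL : β < L) {x : ℝ}
    (hx : x ∈ Ioo 0 β ∪ Ioo β L) :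
    HasDerivAt (axialStrain l L (S.v1 n) (S.v5 n))
      (deriv (fun y => deriv (S.v5 n) y - l * S.v1 n y) x) x := by
  have hxL := union_subset (Ioo_subset_Ioo_right hβL.le) (Ioo_subset_Ioo_left hβ.le) hx
  have d₁ := (S.reg_v1 n).hasDerivAt_derivWithin_Icc two_ne_zero hxL
  have dd₅ : DifferentiableAt ℝ (deriv (S.v5 n)) x := hx.elim
    (fun h => ((S.reg_v5_left n).mono Ioo_subset_Icc_self).differentiableAt_deriv isOpen_Ioo h)
    (fun h => ((S.reg_v5_right n).mono Ioo_subset_Icc_self).differentiableAt_deriv isOpen_Ioo h)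
  refine (dd₅.sub (d₁.differentiableAt.const_mul _)).hasDerivAt.congr_of_eventuallyEq ?_
  filter_upwards [derivWithin_Icc_eventuallyEq_deriv (f := S.v5 n) hxL] with y hy
  simp only [axialStrain, hy, Pi.sub_apply]

theorem derivWithin_resolvent_eq (hβ : 0 < β) (hβL : β < L) {x : ℝ}
    (hx : x ∈ Ioo 0 β ∪ Ioo β L) :
    I * S.lam n * derivWithin (S.v1 n) (Icc 0 L) x - derivWithin (S.v2 n) (Icc 0 L) x
        = (S.lam n : ℂ) ^ (-(ℓ : ℤ)) * derivWithin (S.f1 n) (Icc 0 L) x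
      ∧ I * S.lam n * derivWithin (S.v3 n) (Icc 0 L) x - derivWithin (S.v4 n) (Icc 0 L) x
        = (S.lam n : ℂ) ^ (-(ℓ : ℤ)) * derivWithin (S.f3 n) (Icc 0 L) x
      ∧ I * S.lam n * derivWithin (S.v5 n) (Icc 0 L) x - derivWithin (S.v6 n) (Icc 0 L) x
        = (S.lam n : ℂ) ^ (-(ℓ : ℤ)) * derivWithin (S.f5 n) (Icc 0 L) x := by
  have hxL := union_subset (Ioo_subset_Ioo_right hβL.le) (Ioo_subset_Ioo_left hβ.le) hx
  have hΩ : Ioo 0 β ∪ Ioo β L ∈ 𝓝 x := (isOpen_Ioo.union isOpen_Ioo).mem_nhds hx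
  have d {f : ℝ → ℂ} {k : ℕ} (hf : ContDiffOn ℝ (k + 1) f (Icc 0 L)) :=
    hf.hasDerivAt_derivWithin_Icc (by simp) hxL
  exact ⟨(d (S.reg_v1 n)).const_mul_sub_eq_of_eventuallyEq (d (S.reg_v2 n)) (d (S.reg_f1 n))
      (eventually_of_mem hΩ (S.eq1 n)),
    (d (S.reg_v3 n)).const_mul_sub_eq_of_eventuallyEq (d (S.reg_v4 n)) (d (S.reg_f3 n))
      (eventually_of_mem hΩ (S.eq3 n)),
    (d (S.reg_v5 n)).const_mul_sub_eq_of_eventuallyEq (d (S.reg_v6 n)) (d (S.reg_f5 n))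
      (eventually_of_mem hΩ (S.eq5 n))⟩

theorem hasDerivAt_flux (hβ : 0 < β) (hβL : β < L) {x : ℝ} (hx : x ∈ Ioo 0 β ∪ Ioo β L) :
    HasDerivAt (S.flux n) ((if x < β then a₀ else 0) * ‖S.v6 n x‖ ^ 2
      - S.lam n ^ (-(ℓ : ℤ)) * (S.pairing n x).re) x := by
  have hxL := union_subset (Ioo_subset_Ioo_right hβL.le) (Ioo_subset_Ioo_left hβ.le) hx
  have hdw (f : ℝ → ℂ) : deriv f x = derivWithin f (Icc 0 L) x :=
    (derivWithin_of_mem_nhds (Icc_mem_nhds hxL.1 hxL.2)).symm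
  obtain ⟨r₁, r₃, r₅⟩ := S.derivWithin_resolvent_eq n hβ hβL hx
  have q₁ := S.eq1 n x hx
  have q₃ := S.eq3 n x hx
  have q₅ := S.eq5 n x hx
  have q₂ := S.eq2 n x hx
  have q₄ := S.eq4 n x hx
  have q₆ := S.eq6 n x hx
  rw [hdw (S.v5 n)] at q₂
  rw [hdw (S.v1 n)] at q₄ q₆
  have ha : (if x < β then (a₀ : ℂ) else 0) = ((if x < β then a₀ else 0 : ℝ) : ℂ) := by
    split_ifs <;> simp
  rw [ha] at q₆
  rw [← Complex.ofReal_zpow] at r₁ r₃ r₅ q₁ q₂ q₃ q₄ q₅ q₆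
  have d {f : ℝ → ℂ} (hf : ContDiffOn ℝ 1 f (Icc 0 L)) :=
    hf.hasDerivAt_derivWithin_Icc one_ne_zero hxL
  have hG := ((((d (S.reg_v2 n)).mul_conj (S.hasDerivAt_shearStrain n hxL)).const_mul (k₁ : ℂ)).add
    (((d (S.reg_v4 n)).mul_conj (S.hasDerivAt_derivWithin_v3 n hxL)).const_mul (k₂ : ℂ))).add
    (((d (S.reg_v6 n)).mul_conj (S.hasDerivAt_axialStrain n hβ hβL hx)).const_mul (k₃ : ℂ))
  refine (Complex.reCLM.hasFDerivAt.comp_hasDerivAt x hG).congr_deriv ?_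
  refine re_flux_deriv_eq ?_ (by linear_combination -r₃) ?_ q₂ q₄ q₆
  · simp only [shearStrain]; linear_combination -r₁ - q₃ - l * q₅
  · simp only [axialStrain]; linear_combination -r₅ + l * q₁

theorem damping_identity (hβ : 0 < β) (hβL : β < L) :
    a₀ * ∫ x in (0 : ℝ)..β, ‖S.v6 n x‖ ^ 2
      = S.lam n ^ (-(ℓ : ℤ)) * ∫ x in (0 : ℝ)..L, (S.pairing n x).re := by
  have hL := hβ.trans hβL
  have hP : ContinuousOn (fun x => (S.pairing n x).re) (Icc 0 L) :=
    continuous_re.comp_continuousOn (S.continuousOn_pairing n hL)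
  have hP₁ := (hP.mono (Icc_subset_Icc le_rfl hβL.le)).intervalIntegrable_of_Icc (μ := volume) hβ.le
  have hP₂ := (hP.mono (Icc_subset_Icc hβ.le le_rfl)).intervalIntegrable_of_Icc (μ := volume) hβL.le
  have hv₆ : IntervalIntegrable (fun x => ‖S.v6 n x‖ ^ 2) volume 0 β :=
    (((S.reg_v6 n).continuousOn.norm.pow 2).mono
      (Icc_subset_Icc le_rfl hβL.le)).intervalIntegrable_of_Icc hβ.le
  have hG := S.continuousOn_flux n hL
  have left : ∫ x in (0 : ℝ)..β, (a₀ * ‖S.v6 n x‖ ^ 2 - S.lam n ^ (-(ℓ : ℤ)) * (S.pairing n x).re)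
      = S.flux n β - S.flux n 0 :=
    intervalIntegral.integral_eq_sub_of_hasDerivAt_of_le hβ.le
      (hG.mono (Icc_subset_Icc le_rfl hβL.le))
      (fun x hx => by simpa [hx.2] using S.hasDerivAt_flux n hβ hβL (Or.inl hx))
      ((hv₆.const_mul a₀).sub (hP₁.const_mul _))
  have right : ∫ x in β..L, -(S.lam n ^ (-(ℓ : ℤ)) * (S.pairing n x).re)
      = S.flux n L - S.flux n β :=
    intervalIntegral.integral_eq_sub_of_hasDerivAt_of_le hβL.le
      (hG.mono (Icc_subset_Icc hβ.le le_rfl))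
      (fun x hx => by simpa [not_lt.2 hx.1.le] using S.hasDerivAt_flux n hβ hβL (Or.inr hx))
      (hP₂.const_mul _).neg
  rw [intervalIntegral.integral_sub (hv₆.const_mul a₀) (hP₁.const_mul _),
    intervalIntegral.integral_const_mul, intervalIntegral.integral_const_mul] at left
  rw [intervalIntegral.integral_neg, intervalIntegral.integral_const_mul] at right
  rw [← intervalIntegral.integral_add_adjacent_intervals hP₁ hP₂, S.flux_zero] at *
  rw [S.flux_L] at right
  linarith

theorem forceEnergy_nonneg (hρ₁ : 0 < ρ₁) (hρ₂ : 0 < ρ₂) (hk₁ : 0 < k₁) (hk₂ : 0 < k₂)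
    (hk₃ : 0 < k₃) (hL : 0 < L) : 0 ≤ S.forceEnergy n :=
  intervalIntegral.integral_nonneg hL.le fun x _ =>
    energyDensity_nonneg hρ₁.le hρ₂.le hk₁.le hk₂.le hk₃.le x

theorem norm_pairing_le (hρ₁ : 0 < ρ₁) (hρ₂ : 0 < ρ₂) (hk₁ : 0 < k₁) (hk₂ : 0 < k₂)
    (hk₃ : 0 < k₃) {δ : ℝ} (hδ : 0 < δ) (x : ℝ) :
    ‖S.pairing n x‖ ≤ δ / 2 * S.stateDensity n x + 1 / (2 * δ) * S.forceDensity n x := by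
  have t₁ := norm_ofReal_mul_mul_conj_le hk₁.le hδ
    (shearStrain l L (S.f1 n) (S.f3 n) (S.f5 n) x) (shearStrain l L (S.v1 n) (S.v3 n) (S.v5 n) x)
  have t₂ := norm_ofReal_mul_mul_conj_le hρ₁.le hδ (S.f2 n x) (S.v2 n x)
  have t₃ := norm_ofReal_mul_mul_conj_le hk₂.le hδ
    (derivWithin (S.f3 n) (Icc 0 L) x) (derivWithin (S.v3 n) (Icc 0 L) x)
  have t₄ := norm_ofReal_mul_mul_conj_le hρ₂.le hδ (S.f4 n x) (S.v4 n x)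
  have t₅ := norm_ofReal_mul_mul_conj_le hk₃.le hδ
    (axialStrain l L (S.f1 n) (S.f5 n) x) (axialStrain l L (S.v1 n) (S.v5 n) x)
  have t₆ := norm_ofReal_mul_mul_conj_le hρ₁.le hδ (S.f6 n x) (S.v6 n x)
  unfold pairing stateDensity forceDensity energyDensity
  refine (norm_add_le_of_le (norm_add_le_of_le (norm_add_le_of_le (norm_add_le_of_le
    (norm_add_le_of_le t₁ t₂) t₃) t₄) t₅) t₆).trans_eq ?_
  ring

theorem integral_norm_pairing_le (hρ₁ : 0 < ρ₁) (hρ₂ : 0 < ρ₂) (hk₁ : 0 < k₁) (hk₂ : 0 < k₂)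
    (hk₃ : 0 < k₃) (hL : 0 < L) :
    ∫ x in (0 : ℝ)..L, ‖S.pairing n x‖ ≤ √(S.forceEnergy n) := by
  have hU := (S.continuousOn_stateDensity n hL).intervalIntegrable_of_Icc (μ := volume) hL.le
  have hF := (S.continuousOn_forceDensity n hL).intervalIntegrable_of_Icc (μ := volume) hL.le
  have hP := (S.continuousOn_pairing n hL).norm.intervalIntegrable_of_Icc (μ := volume) hL.le
  have key : ∀ δ > 0, ∫ x in (0 : ℝ)..L, ‖S.pairing n x‖ ≤ S.forceEnergy n / 2 / δ + 1 / 2 * δ := by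
    intro δ hδ
    calc ∫ x in (0 : ℝ)..L, ‖S.pairing n x‖
        ≤ ∫ x in (0 : ℝ)..L, (δ / 2 * S.stateDensity n x + 1 / (2 * δ) * S.forceDensity n x) :=
          intervalIntegral.integral_mono_on hL.le hP ((hU.const_mul _).add (hF.const_mul _))
            fun x _ => S.norm_pairing_le n hρ₁ hρ₂ hk₁ hk₂ hk₃ hδ x
      _ = S.forceEnergy n / 2 / δ + 1 / 2 * δ := by
          rw [intervalIntegral.integral_add (hU.const_mul _) (hF.const_mul _),
            intervalIntegral.integral_const_mul, intervalIntegral.integral_const_mul,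
            S.integral_stateDensity n hL, forceEnergy]
          field_simp
          ring
  have hE := S.forceEnergy_nonneg n hρ₁ hρ₂ hk₁ hk₂ hk₃ hL
  calc _ ≤ 2 * √(S.forceEnergy n / 2 * (1 / 2)) :=
        le_two_mul_sqrt_mul_of_forall_le (by positivity) (by norm_num) key
    _ = √(S.forceEnergy n) := by
        rw [show S.forceEnergy n / 2 * (1 / 2) = S.forceEnergy n / 2 ^ 2 by ring,
          Real.sqrt_div' _ (by norm_num), Real.sqrt_sq (by norm_num)]
        ring

theorem mul_abs_pow_mul_integral_v6_le (hρ₁ : 0 < ρ₁) (hρ₂ : 0 < ρ₂) (hk₁ : 0 < k₁) (hk₂ : 0 < k₂)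
    (hk₃ : 0 < k₃) (ha₀ : 0 ≤ a₀) (hβ : 0 < β) (hβL : β < L) :
    a₀ * (|S.lam n| ^ ℓ * ∫ x in (0 : ℝ)..β, ‖S.v6 n x‖ ^ 2) ≤ √(S.forceEnergy n) := by
  have hμ : |S.lam n| ^ ℓ ≠ 0 := pow_ne_zero _ (abs_ne_zero.2 (S.lam_ne n))
  have hL := hβ.trans hβL
  have hnonneg : 0 ≤ a₀ * ∫ x in (0 : ℝ)..β, ‖S.v6 n x‖ ^ 2 :=
    mul_nonneg ha₀ (intervalIntegral.integral_nonneg hβ.le fun _ _ => by positivity)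
  calc a₀ * (|S.lam n| ^ ℓ * ∫ x in (0 : ℝ)..β, ‖S.v6 n x‖ ^ 2)
      = |S.lam n| ^ ℓ * |a₀ * ∫ x in (0 : ℝ)..β, ‖S.v6 n x‖ ^ 2| := by
        rw [abs_of_nonneg hnonneg]; ring
    _ = |∫ x in (0 : ℝ)..L, (S.pairing n x).re| := by
        rw [S.damping_identity n hβ hβL, abs_mul, abs_zpow, zpow_neg, zpow_natCast,
          mul_inv_cancel_left₀ hμ]
    _ ≤ ∫ x in (0 : ℝ)..L, |(S.pairing n x).re| :=
        intervalIntegral.abs_integral_le_integral_abs hL.le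
    _ ≤ ∫ x in (0 : ℝ)..L, ‖S.pairing n x‖ := by
        refine intervalIntegral.integral_mono_on hL.le ?_ ?_ fun x _ => abs_re_le_norm _
        · exact (continuous_abs.comp_continuousOn (continuous_re.comp_continuousOn
            (S.continuousOn_pairing n hL))).intervalIntegrable_of_Icc hL.le
        · exact (S.continuousOn_pairing n hL).norm.intervalIntegrable_of_Icc hL.le
    _ ≤ √(S.forceEnergy n) := S.integral_norm_pairing_le n hρ₁ hρ₂ hk₁ hk₂ hk₃ hL

theorem norm_f3_le (hL : 0 < L) {x : ℝ} (hx : x ∈ Icc 0 L) :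
    ‖S.f3 n x‖ ≤ ∫ y in (0 : ℝ)..L, ‖derivWithin (S.f3 n) (Icc 0 L) y‖ :=
  norm_le_integral_norm_of_hasDerivAt hx (S.reg_f3 n).continuousOn
    ((S.reg_f3 n).continuousOn_derivWithin (uniqueDiffOn_Icc hL) le_rfl)
    (fun _ hy => (S.reg_f3 n).hasDerivAt_derivWithin_Icc one_ne_zero hy)
    (S.bc_zero n).2.2.2.2.2.2.2.1

/-- `w = f₁ + σ f₅` solves `w' = σ l w + (shear - f₃ + σ axial)`, so the unimodular integrating
factor `exp (-σ l x)` turns it into an integral of strains. -/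
theorem norm_f1_add_mul_f5_le (hL : 0 < L) {σ : ℂ} (hσ : σ = I ∨ σ = -I) {x : ℝ}
    (hx : x ∈ Icc 0 L) :
    ‖S.f1 n x + σ * S.f5 n x‖ ≤ ∫ y in (0 : ℝ)..L, (‖shearStrain l L (S.f1 n) (S.f3 n) (S.f5 n) y‖
      + ‖S.f3 n y‖ + ‖axialStrain l L (S.f1 n) (S.f5 n) y‖) := by
  have hσ2 : σ ^ 2 = -1 := by rcases hσ with rfl | rfl <;> simp
  have hexp (y : ℝ) : ‖exp (-(σ * l * y))‖ = 1 := by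
    rcases hσ with rfl | rfl <;> simp [Complex.norm_exp]
  have hσ1 : ‖σ‖ = 1 := by rcases hσ with rfl | rfl <;> simp
  set s := shearStrain l L (S.f1 n) (S.f3 n) (S.f5 n)
  set a := axialStrain l L (S.f1 n) (S.f5 n)
  have hs : ContinuousOn s (Icc 0 L) := continuousOn_shearStrain hL (S.reg_f1 n)
    (S.reg_f3 n).continuousOn (S.reg_f5 n).continuousOn
  have ha : ContinuousOn a (Icc 0 L) :=
    continuousOn_axialStrain hL (S.reg_f1 n).continuousOn (S.reg_f5 n)
  have hf₁ := (S.reg_f1 n).continuousOn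
  have hf₃ := (S.reg_f3 n).continuousOn
  have hf₅ := (S.reg_f5 n).continuousOn
  have hderiv : ∀ y ∈ Ioo 0 L,
      HasDerivAt (fun y : ℝ => exp (-(σ * l * y)) * (S.f1 n y + σ * S.f5 n y))
      (exp (-(σ * l * y)) * (s y - S.f3 n y + σ * a y)) y := by
    intro y hy
    have d₁ := (S.reg_f1 n).hasDerivAt_derivWithin_Icc one_ne_zero hy
    have d₅ := (S.reg_f5 n).hasDerivAt_derivWithin_Icc one_ne_zero hy
    have dE : HasDerivAt (fun y : ℝ => exp (-(σ * l * y))) (exp (-(σ * l * y)) * -(σ * l)) y := by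
      simpa using (((hasDerivAt_id y).ofReal_comp.const_mul (σ * l)).neg.cexp)
    refine (dE.mul (d₁.add (d₅.const_mul σ))).congr_deriv ?_
    simp only [s, a, shearStrain, axialStrain, Pi.add_apply]
    linear_combination -(exp (-(σ * l * y)) * l * S.f5 n y) * hσ2
  have hbc : exp (-(σ * l * (0 : ℝ))) * (S.f1 n 0 + σ * S.f5 n 0) = 0 := by
    simp [(S.bc_zero n).2.2.2.2.2.2.1, (S.bc_zero n).2.2.2.2.2.2.2.2]
  have key := norm_le_integral_norm_of_hasDerivAt hx (by fun_prop)
    (u' := fun y => exp (-(σ * l * y)) * (s y - S.f3 n y + σ * a y)) (by fun_prop) hderiv hbc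
  rw [norm_mul, hexp, one_mul] at key
  refine key.trans (intervalIntegral.integral_mono_on hL.le ?_ ?_ fun y _ => ?_)
  · exact ContinuousOn.intervalIntegrable_of_Icc hL.le (by fun_prop)
  · exact ContinuousOn.intervalIntegrable_of_Icc hL.le (by fun_prop)
  · rw [norm_mul, hexp, one_mul]
    refine (norm_add_le _ _).trans ?_
    rw [norm_mul, hσ1, one_mul]
    linarith [norm_sub_le (s y) (S.f3 n y)]

theorem norm_f5_le (hL : 0 < L) {x : ℝ} (hx : x ∈ Icc 0 L) :
    ‖S.f5 n x‖ ≤ ∫ y in (0 : ℝ)..L, (‖shearStrain l L (S.f1 n) (S.f3 n) (S.f5 n) y‖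
      + ‖S.f3 n y‖ + ‖axialStrain l L (S.f1 n) (S.f5 n) y‖) := by
  have hI := S.norm_f1_add_mul_f5_le n hL (Or.inl rfl) hx
  have hnegI := S.norm_f1_add_mul_f5_le n hL (Or.inr rfl) hx
  have h₂ : ‖(S.f1 n x + I * S.f5 n x) - (S.f1 n x + -I * S.f5 n x)‖ = 2 * ‖S.f5 n x‖ := by
    rw [show S.f1 n x + I * S.f5 n x - (S.f1 n x + -I * S.f5 n x) = 2 * I * S.f5 n x by ring]
    simp
  linarith [norm_sub_le (S.f1 n x + I * S.f5 n x) (S.f1 n x + -I * S.f5 n x)]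

theorem norm_f5_le_sqrt_forceEnergy (hρ₁ : 0 < ρ₁) (hρ₂ : 0 < ρ₂) (hk₁ : 0 < k₁) (hk₂ : 0 < k₂)
    (hk₃ : 0 < k₃) (hL : 0 < L) {x : ℝ} (hx : x ∈ Icc 0 L) :
    ‖S.f5 n x‖ ≤ (√(L / k₁) + L * √(L / k₂) + √(L / k₃)) * √(S.forceEnergy n) := by
  have hs := continuousOn_shearStrain (l := l) hL (S.reg_f1 n) (S.reg_f3 n).continuousOn
    (S.reg_f5 n).continuousOn
  have ha := continuousOn_axialStrain (l := l) hL (S.reg_f1 n).continuousOn (S.reg_f5 n)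
  have hd := (S.reg_f3 n).continuousOn_derivWithin (uniqueDiffOn_Icc hL) le_rfl
  have hf := (S.reg_f3 n).continuousOn
  have hD := S.continuousOn_forceDensity n hL
  have hcomp (y : ℝ) : k₁ * ‖shearStrain l L (S.f1 n) (S.f3 n) (S.f5 n) y‖ ^ 2 ≤ S.forceDensity n y
      ∧ k₂ * ‖derivWithin (S.f3 n) (Icc 0 L) y‖ ^ 2 ≤ S.forceDensity n y
      ∧ k₃ * ‖axialStrain l L (S.f1 n) (S.f5 n) y‖ ^ 2 ≤ S.forceDensity n y := by
    simp only [forceDensity, energyDensity]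
    have : 0 ≤ ρ₁ * ‖S.f2 n y‖ ^ 2 + ρ₂ * ‖S.f4 n y‖ ^ 2 + ρ₁ * ‖S.f6 n y‖ ^ 2 := by positivity
    have := mul_nonneg hk₁.le (sq_nonneg ‖shearStrain l L (S.f1 n) (S.f3 n) (S.f5 n) y‖)
    have := mul_nonneg hk₂.le (sq_nonneg ‖derivWithin (S.f3 n) (Icc 0 L) y‖)
    have := mul_nonneg hk₃.le (sq_nonneg ‖axialStrain l L (S.f1 n) (S.f5 n) y‖)
    exact ⟨by linarith, by linarith, by linarith⟩
  have i₁ := integral_norm_le_sqrt_of_mul_sq_le hL.le hk₁ hs hD fun y _ => (hcomp y).1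
  have i₂ := integral_norm_le_sqrt_of_mul_sq_le hL.le hk₂ hd hD fun y _ => (hcomp y).2.1
  have i₃ := integral_norm_le_sqrt_of_mul_sq_le hL.le hk₃ ha hD fun y _ => (hcomp y).2.2
  simp only [sub_zero, mul_div_right_comm L] at i₁ i₂ i₃
  rw [Real.sqrt_mul (by positivity)] at i₁ i₂ i₃
  have i₄ : ∫ y in (0 : ℝ)..L, ‖S.f3 n y‖
      ≤ L * ∫ y in (0 : ℝ)..L, ‖derivWithin (S.f3 n) (Icc 0 L) y‖ :=
    (intervalIntegral.integral_mono_on hL.le (hf.norm.intervalIntegrable_of_Icc hL.le)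
      intervalIntegrable_const fun y hy => S.norm_f3_le n hL hy).trans_eq (by simp)
  have i₅ := mul_le_mul_of_nonneg_left i₂ hL.le
  calc ‖S.f5 n x‖ ≤ _ := S.norm_f5_le n hL hx
    _ = (∫ y in (0 : ℝ)..L, ‖shearStrain l L (S.f1 n) (S.f3 n) (S.f5 n) y‖)
        + (∫ y in (0 : ℝ)..L, ‖S.f3 n y‖)
        + ∫ y in (0 : ℝ)..L, ‖axialStrain l L (S.f1 n) (S.f5 n) y‖ := by
      rw [intervalIntegral.integral_add, intervalIntegral.integral_add] <;>
        exact ContinuousOn.intervalIntegrable_of_Icc hL.le (by fun_prop)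
    _ ≤ _ := by unfold forceEnergy at *; linarith

theorem abs_pow_mul_integral_v5_le (hβ : 0 < β) (hβL : β < L) :
    |S.lam n| ^ (ℓ + 2) * ∫ x in (0 : ℝ)..β, ‖S.v5 n x‖ ^ 2
      ≤ 2 * (|S.lam n| ^ ℓ * ∫ x in (0 : ℝ)..β, ‖S.v6 n x‖ ^ 2)
        + 2 * ((|S.lam n| ^ ℓ)⁻¹ * ∫ x in (0 : ℝ)..β, ‖S.f5 n x‖ ^ 2) := by
  have hsub : Icc 0 β ⊆ Icc 0 L := Icc_subset_Icc le_rfl hβL.le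
  have hv₅ : IntervalIntegrable (fun x => ‖S.v5 n x‖ ^ 2) volume 0 β :=
    (((S.reg_v5 n).continuousOn.norm.pow 2).mono hsub).intervalIntegrable_of_Icc hβ.le
  have hv₆ : IntervalIntegrable (fun x => ‖S.v6 n x‖ ^ 2) volume 0 β :=
    (((S.reg_v6 n).continuousOn.norm.pow 2).mono hsub).intervalIntegrable_of_Icc hβ.le
  have hf₅ : IntervalIntegrable (fun x => ‖S.f5 n x‖ ^ 2) volume 0 β :=
    (((S.reg_f5 n).continuousOn.norm.pow 2).mono hsub).intervalIntegrable_of_Icc hβ.le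
  simp only [← intervalIntegral.integral_const_mul]
  rw [← intervalIntegral.integral_add ((hv₆.const_mul _).const_mul _)
    ((hf₅.const_mul _).const_mul _)]
  exact intervalIntegral.integral_mono_on_of_le_Ioo hβ.le (hv₅.const_mul _)
    (((hv₆.const_mul _).const_mul _).add ((hf₅.const_mul _).const_mul _))
    fun x hx => abs_pow_add_two_mul_norm_sq_le (S.lam_ne n) ℓ (S.eq5 n x (Or.inl hx))

theorem norm_lam_pow_mul_integral_v5_le (hρ₁ : 0 < ρ₁) (hρ₂ : 0 < ρ₂) (hk₁ : 0 < k₁) (hk₂ : 0 < k₂)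
    (hk₃ : 0 < k₃) (hβ : 0 < β) (hβL : β < L) (hn : 1 ≤ |S.lam n|) :
    ‖S.lam n ^ (ℓ + 2) * ∫ x in (0 : ℝ)..β, ‖S.v5 n x‖ ^ 2‖
      ≤ 2 * ‖S.lam n ^ ℓ * ∫ x in (0 : ℝ)..β, ‖S.v6 n x‖ ^ 2‖
        + 2 * (β * (√(L / k₁) + L * √(L / k₂) + √(L / k₃)) ^ 2 * S.forceEnergy n) := by
  have hL := hβ.trans hβL
  have hint (f : ℝ → ℂ) : 0 ≤ ∫ x in (0 : ℝ)..β, ‖f x‖ ^ 2 :=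
    intervalIntegral.integral_nonneg hβ.le fun _ _ => by positivity
  have hf₅ : ∫ x in (0 : ℝ)..β, ‖S.f5 n x‖ ^ 2
      ≤ β * (√(L / k₁) + L * √(L / k₂) + √(L / k₃)) ^ 2 * S.forceEnergy n := by
    refine (intervalIntegral.integral_mono_on hβ.le ((((S.reg_f5 n).continuousOn.norm.pow 2).mono
      (Icc_subset_Icc le_rfl hβL.le)).intervalIntegrable_of_Icc hβ.le) intervalIntegrable_const
      fun x hx => pow_le_pow_left₀ (norm_nonneg _) (S.norm_f5_le_sqrt_forceEnergy n hρ₁ hρ₂ hk₁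
        hk₂ hk₃ hL ⟨hx.1, hx.2.trans hβL.le⟩) 2).trans_eq ?_
    rw [intervalIntegral.integral_const, smul_eq_mul, mul_pow,
      Real.sq_sqrt (S.forceEnergy_nonneg n hρ₁ hρ₂ hk₁ hk₂ hk₃ hL)]
    ring
  have hinv : (|S.lam n| ^ ℓ)⁻¹ ≤ 1 := inv_le_one_of_one_le₀ (one_le_pow₀ hn)
  rw [norm_mul, norm_mul, norm_pow, norm_pow, Real.norm_eq_abs, Real.norm_of_nonneg (hint _),
    Real.norm_of_nonneg (hint _)]
  have := (mul_le_of_le_one_left (hint _) hinv).trans hf₅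
  linarith [S.abs_pow_mul_integral_v5_le n hβ hβL]

end BresseSetting

theorem bresse_lemma1_estimates_general (ρ₁ ρ₂ k₁ k₂ k₃ l L β a₀ : ℝ) (ℓ : ℕ)
    (hrho1 : 0 < ρ₁) (hrho2 : 0 < ρ₂) (hk1 : 0 < k₁) (hk2 : 0 < k₂) (hk3 : 0 < k₃)
    (hL : 0 < L) (ha0 : 0 < a₀) (hbeta : 0 < β) (hbetaL : β < L)
    (S : BresseSetting ρ₁ ρ₂ k₁ k₂ k₃ l L β a₀ ℓ) :
    Tendsto (fun n => (S.lam n) ^ ℓ * ∫ x in (0 : ℝ)..β, ‖S.v6 n x‖ ^ 2) atTop (nhds 0) ∧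
    Tendsto (fun n => (S.lam n) ^ (ℓ + 2) * ∫ x in (0 : ℝ)..β, ‖S.v5 n x‖ ^ 2) atTop (nhds 0) := by
  have hE := S.tendsto_forceEnergy hL
  have hv₆ : Tendsto (fun n => (S.lam n) ^ ℓ * ∫ x in (0 : ℝ)..β, ‖S.v6 n x‖ ^ 2) atTop (𝓝 0) := by
    refine squeeze_zero_norm (fun n => ?_) (by simpa using hE.sqrt.div_const a₀)
    rw [le_div_iff₀ ha0, norm_mul, norm_pow, Real.norm_eq_abs, Real.norm_of_nonneg
      (intervalIntegral.integral_nonneg hbeta.le fun _ _ => by positivity), mul_comm]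
    exact S.mul_abs_pow_mul_integral_v6_le n hrho1 hrho2 hk1 hk2 hk3 ha0.le hbeta hbetaL
  have hbound := (hv₆.norm.const_mul 2).add
    ((hE.const_mul (β * (√(L / k₁) + L * √(L / k₂) + √(L / k₃)) ^ 2)).const_mul 2)
  rw [norm_zero, mul_zero, mul_zero, mul_zero, add_zero] at hbound
  refine ⟨hv₆, squeeze_zero_norm' ?_ hbound⟩
  filter_upwards [S.lam_tendsto.eventually_ge_atTop 1] with n hn
  exact S.norm_lam_pow_mul_integral_v5_le n hrho1 hrho2 hk1 hk2 hk3 hbeta hbetaL hn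

theorem bresse_lemma1_estimates (ρ₁ ρ₂ k₁ k₂ k₃ l L β a₀ : ℝ) (ℓ : ℕ)
    (hrho1 : 0 < ρ₁) (hrho2 : 0 < ρ₂) (hk1 : 0 < k₁) (hk2 : 0 < k₂) (hk3 : 0 < k₃)
    (hl : 0 < l) (hL : 0 < L) (ha0 : 0 < a₀) (hbeta : 0 < β) (hbetaL : β < L)
    (S : BresseSetting ρ₁ ρ₂ k₁ k₂ k₃ l L β a₀ ℓ)
    (hH : (k₁ / ρ₁ = k₂ / ρ₂ ∧ k₁ = k₃ ∧ ℓ = 0) ∨ (k₁ / ρ₁ = k₂ / ρ₂ ∧ k₁ ≠ k₃ ∧ ℓ = 2) ∨ (k₁ / ρ₁ ≠ k₂ / ρ₂ ∧ ℓ = 4)) :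
    Tendsto (fun n => (S.lam n) ^ ℓ * ∫ x in (0 : ℝ)..β, ‖S.v6 n x‖ ^ 2) atTop (nhds 0) ∧
    Tendsto (fun n => (S.lam n) ^ (ℓ + 2) * ∫ x in (0 : ℝ)..β, ‖S.v5 n x‖ ^ 2) atTop (nhds 0) :=
  bresse_lemma1_estimates_general ρ₁ ρ₂ k₁ k₂ k₃ l L β a₀ ℓ hrho1 hrho2 hk1 hk2 hk3 hL ha0 hbeta
    hbetaL S
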